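/- Let E, F, G be normed spaces and T: E → F, S: F → G bounded linear maps with S injective and ‖S f‖ ≤ ‖f‖ for all f. If T is compact and for every s > 0 there is c(s) > 0 with ‖T u‖_F ≤ s‖u‖_E + c(s)‖S T u‖_G for all u ∈ E, then: there is no sequence (uₙ) with ‖uₙ‖_E = 1 such that ‖T uₙ‖_F ≥ s₀ + n‖S T uₙ‖_G for some fixed s₀ > 0 and all n. -/

import Mathlib

theorem stmt7_general
    {E F G : Type*}
    [NormedAddCommGroup E] [NormedSpace ℝ E]
    [NormedAddCommGroup F] [NormedSpace ℝ F]
    [NormedAddCommGroup G] [NormedSpace ℝ G]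
    (T : E →L[ℝ] F) (S : F →L[ℝ] G)
    (hineq : ∀ s : ℝ, 0 < s → ∃ c : ℝ, 0 < c ∧
      ∀ u : E, ‖T u‖ ≤ s * ‖u‖ + c * ‖S (T u)‖) :
    ¬ ∃ s₀ : ℝ, 0 < s₀ ∧ ∃ u : ℕ → E, (∀ n, ‖u n‖ = 1) ∧
      ∀ n : ℕ, s₀ + n * ‖S (T (u n))‖ ≤ ‖T (u n)‖ := by
  rintro ⟨s₀, hs₀, u, hu, hgrowth⟩
  obtain ⟨c, -, hc⟩ := hineq (s₀ / 2) (half_pos hs₀)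
  obtain ⟨n, hcn⟩ := exists_nat_ge c
  have upper : ‖T (u n)‖ ≤ s₀ / 2 + c * ‖S (T (u n))‖ := by
    simpa only [hu n, mul_one] using hc (u n)
  have lower := hgrowth n
  have hcS_le : c * ‖S (T (u n))‖ ≤ n * ‖S (T (u n))‖ :=
    mul_le_mul_of_nonneg_right hcn (norm_nonneg _)
  linarith

/-- abstract operator-theoretic necessity direction. If `T` is a
compact operator and the interpolation inequality holds, then no normalized
sequence `uₙ` satisfies `‖T uₙ‖ ≥ s₀ + n ‖S (T uₙ)‖`. -/
theorem stmt7
    {E F G : Type*}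
    [NormedAddCommGroup E] [NormedSpace ℝ E]
    [NormedAddCommGroup F] [NormedSpace ℝ F]
    [NormedAddCommGroup G] [NormedSpace ℝ G]
    (T : E →L[ℝ] F) (S : F →L[ℝ] G)
    (hS : Function.Injective S)
    (hSnorm : ∀ f : F, ‖S f‖ ≤ ‖f‖)
    (hT : IsCompactOperator T)
    (hineq : ∀ s : ℝ, 0 < s → ∃ c : ℝ, 0 < c ∧
      ∀ u : E, ‖T u‖ ≤ s * ‖u‖ + c * ‖S (T u)‖) :
    ¬ ∃ s₀ : ℝ, 0 < s₀ ∧ ∃ u : ℕ → E, (∀ n, ‖u n‖ = 1) ∧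
      ∀ n : ℕ, s₀ + n * ‖S (T (u n))‖ ≤ ‖T (u n)‖ :=
  stmt7_general T S hineq
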